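/- (Hatsell–Nolte) For the channel Y = Z + N, the log-likelihood ratio satisfies Poisson's equation: the Laplacian ∇² log l(y) equals E[‖Z‖^2 | Y = y] − ‖E[Z | Y = y]‖^2 for every y ∈ ℝ^L. -/

import Mathlib

open MeasureTheory ProbabilityTheory Real Filter
open scoped ENNReal NNReal Topology

noncomputable section

/-- Density `p_N(y) = (2π)^{-L/2} exp(-‖y‖²/2)` of the `L`-dimensional standard Gaussian. -/
def stdGaussianDensity {L : ℕ} (y : EuclideanSpace ℝ (Fin L)) : ℝ :=
  (2 * π) ^ (-(L : ℝ) / 2) * Real.exp (-‖y‖ ^ 2 / 2)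

/-- Density `p_Y(y) = E[p_N(y − Z)]` of the output `Y = Z + N` of the standard Gaussian
channel with input `Z`. -/
def outDensity {Ω : Type*} [MeasurableSpace Ω] {L : ℕ} (μ : Measure Ω)
    (Z : Ω → EuclideanSpace ℝ (Fin L)) (y : EuclideanSpace ℝ (Fin L)) : ℝ :=
  ∫ ω, stdGaussianDensity (y - Z ω) ∂μ

/-- Likelihood ratio `l(y) = p_Y(y) / p_N(y)`. -/
def likRatio {Ω : Type*} [MeasurableSpace Ω] {L : ℕ} (μ : Measure Ω)
    (Z : Ω → EuclideanSpace ℝ (Fin L)) (y : EuclideanSpace ℝ (Fin L)) : ℝ :=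
  outDensity μ Z y / stdGaussianDensity y

/-- Conditional mean `E[Z | Y = y] = E[Z · p_N(y − Z)] / p_Y(y)` of the input `Z` given the
output value `Y = y` (Bayes formula). -/
def condMeanBayes {Ω : Type*} [MeasurableSpace Ω] {L : ℕ} (μ : Measure Ω)
    (Z : Ω → EuclideanSpace ℝ (Fin L)) (y : EuclideanSpace ℝ (Fin L)) :
    EuclideanSpace ℝ (Fin L) :=
  WithLp.toLp 2 (fun l => (∫ ω, Z ω l * stdGaussianDensity (y - Z ω) ∂μ) / outDensity μ Z y)

/-- The Laplacian `∇²f(y) = Σ_l ∂²f/∂y_l²` of a function on `ℝ^L`. -/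
def laplacian {L : ℕ} (f : EuclideanSpace ℝ (Fin L) → ℝ) (y : EuclideanSpace ℝ (Fin L)) : ℝ :=
  ∑ l, fderiv ℝ (fun z => fderiv ℝ f z (EuclideanSpace.single l 1)) y
    (EuclideanSpace.single l 1)

/-! Since `p_N(y - z) = p_N(y) · exp(⟪z, y⟫ - ‖z‖²/2)`, the likelihood ratio is
`l(y) = E[exp(⟪Z, y⟫ - ‖Z‖²/2)]`, the partition function of an exponential family in `y`,
and Bayes' formula turns every conditional expectation given `Y = y` into an average against
these exponential weights. The weights are at most `exp(‖y‖²/2)`, so a second moment of `Z`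
lets us differentiate twice under the integral: the gradient of `log l` is the tilted mean
`E[Z | Y = y]`, its Hessian the tilted covariance, whose trace is the right-hand side. -/

theorem HasFDerivAt.fun_div {𝕜 E : Type*} [NontriviallyNormedField 𝕜] [NormedAddCommGroup E]
    [NormedSpace 𝕜 E] {f g : E → 𝕜} {f' g' : E →L[𝕜] 𝕜} {y : E}
    (hf : HasFDerivAt f f' y) (hg : HasFDerivAt g g' y) (hy : g y ≠ 0) :
    HasFDerivAt (fun x => f x / g x) ((g y)⁻¹ • f' - (f y / g y ^ 2) • g') y := by
  simp only [div_eq_mul_inv]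
  refine (hf.fun_mul ((hasDerivAt_inv hy).comp_hasFDerivAt y hg)).congr_fderiv ?_
  ext v
  simp only [Function.comp_apply, add_apply, smul_apply, smul_eq_mul, neg_mul, mul_neg, sub_apply]
  field_simp
  ring

open scoped RealInnerProductSpace

section PointLikRatio

variable {E : Type*} [NormedAddCommGroup E] [InnerProductSpace ℝ E]

def pointLikRatio (z y : E) : ℝ :=
  exp (⟪z, y⟫ - ‖z‖ ^ 2 / 2)

theorem pointLikRatio_pos (z y : E) : 0 < pointLikRatio z y :=
  exp_pos _

theorem pointLikRatio_le (z y : E) : pointLikRatio z y ≤ exp (‖y‖ ^ 2 / 2) := by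
  refine exp_le_exp.2 ?_
  nlinarith [norm_sub_sq_real y z, real_inner_comm z y, sq_nonneg ‖y - z‖]

theorem continuous_pointLikRatio_left (y : E) : Continuous (fun z => pointLikRatio z y) := by
  unfold pointLikRatio
  fun_prop

theorem hasFDerivAt_pointLikRatio (z y : E) :
    HasFDerivAt (pointLikRatio z) (pointLikRatio z y • innerSL ℝ z) y :=
  ((innerSL ℝ z).hasFDerivAt.sub_const _).exp

end PointLikRatio

theorem stdGaussianDensity_pos {L : ℕ} (y : EuclideanSpace ℝ (Fin L)) :
    0 < stdGaussianDensity y :=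
  mul_pos (rpow_pos_of_pos (by positivity) _) (exp_pos _)

theorem stdGaussianDensity_sub {L : ℕ} (y z : EuclideanSpace ℝ (Fin L)) :
    stdGaussianDensity (y - z) = stdGaussianDensity y * pointLikRatio z y := by
  rw [stdGaussianDensity, stdGaussianDensity, pointLikRatio, mul_assoc, ← exp_add,
    norm_sub_sq_real, real_inner_comm]
  ring_nf

section WeightedLikRatio

variable {Ω E : Type*} [MeasurableSpace Ω] {μ : Measure Ω} [NormedAddCommGroup E]
  [InnerProductSpace ℝ E] {Z : Ω → E} {g : Ω → ℝ}

variable (μ Z) in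
def weightedLikRatio (g : Ω → ℝ) (y : E) : ℝ :=
  ∫ ω, g ω * pointLikRatio (Z ω) y ∂μ

theorem integrable_mul_pointLikRatio (hZ : AEStronglyMeasurable Z μ) (hg : Integrable g μ)
    (y : E) : Integrable (fun ω => g ω * pointLikRatio (Z ω) y) μ := by
  refine hg.mul_bdd ((continuous_pointLikRatio_left y).comp_aestronglyMeasurable hZ)
    (c := exp (‖y‖ ^ 2 / 2)) (ae_of_all _ fun ω => ?_)
  rw [Real.norm_of_nonneg (pointLikRatio_pos _ _).le]
  exact pointLikRatio_le _ _

theorem norm_smul_pointLikRatio_smul_innerSL (c : ℝ) (z y : E) :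
    ‖c • pointLikRatio z y • innerSL ℝ z‖ = ‖c * ‖z‖‖ * pointLikRatio z y := by
  rw [norm_smul, norm_smul, innerSL_apply_norm, Real.norm_of_nonneg (pointLikRatio_pos _ _).le,
    norm_mul, norm_norm]
  ring

theorem integrable_smul_pointLikRatio_smul_innerSL (hZ : AEStronglyMeasurable Z μ)
    (hg : AEStronglyMeasurable g μ) (hgZ : Integrable (fun ω => g ω * ‖Z ω‖) μ) (y : E) :
    Integrable (fun ω => g ω • pointLikRatio (Z ω) y • innerSL ℝ (Z ω)) μ := by
  refine (hgZ.norm.mul_const (exp (‖y‖ ^ 2 / 2))).mono' (hg.smul ?_) (ae_of_all _ fun ω => ?_)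
  · exact ((continuous_pointLikRatio_left y).smul (innerSL ℝ).continuous).comp_aestronglyMeasurable
      hZ
  · rw [norm_smul_pointLikRatio_smul_innerSL]
    gcongr
    exact pointLikRatio_le _ _

theorem hasFDerivAt_weightedLikRatio (hZ : AEStronglyMeasurable Z μ) (hg : Integrable g μ)
    (hgZ : Integrable (fun ω => g ω * ‖Z ω‖) μ) (y : E) :
    HasFDerivAt (weightedLikRatio μ Z g)
      (∫ ω, g ω • pointLikRatio (Z ω) y • innerSL ℝ (Z ω) ∂μ) y := by
  have hball : ∀ x ∈ Metric.ball y 1, exp (‖x‖ ^ 2 / 2) ≤ exp ((‖y‖ + 1) ^ 2 / 2) := by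
    intro x hx
    have : ‖x‖ ≤ ‖y‖ + 1 := by
      have := norm_le_norm_add_norm_sub' x y
      rw [Metric.mem_ball, dist_eq_norm] at hx
      linarith
    gcongr
  refine hasFDerivAt_integral_of_dominated_of_fderiv_le (Metric.ball_mem_nhds y one_pos)
    (Eventually.of_forall fun x => (integrable_mul_pointLikRatio hZ hg x).aestronglyMeasurable)
    (integrable_mul_pointLikRatio hZ hg y)
    (integrable_smul_pointLikRatio_smul_innerSL hZ hg.1 hgZ y).aestronglyMeasurable
    (bound := fun ω => ‖g ω * ‖Z ω‖‖ * exp ((‖y‖ + 1) ^ 2 / 2)) ?_ (hgZ.norm.mul_const _)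
    (ae_of_all _ fun ω x _ => (hasFDerivAt_pointLikRatio (Z ω) x).const_mul (g ω))
  refine ae_of_all _ fun ω x hx => ?_
  rw [norm_smul_pointLikRatio_smul_innerSL]
  gcongr
  exact (pointLikRatio_le _ _).trans (hball x hx)

theorem integral_smul_pointLikRatio_smul_innerSL_apply (hZ : AEStronglyMeasurable Z μ)
    (hg : AEStronglyMeasurable g μ) (hgZ : Integrable (fun ω => g ω * ‖Z ω‖) μ) (y v : E) :
    (∫ ω, g ω • pointLikRatio (Z ω) y • innerSL ℝ (Z ω) ∂μ) v
      = weightedLikRatio μ Z (fun ω => g ω * ⟪Z ω, v⟫) y := by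
  rw [ContinuousLinearMap.integral_apply
    (integrable_smul_pointLikRatio_smul_innerSL hZ hg hgZ y)]
  refine integral_congr_ae (ae_of_all _ fun ω => ?_)
  simp only [smul_apply, innerSL_apply_apply, smul_eq_mul]
  ring

theorem integrable_inner_mul_norm (hZ : MemLp Z 2 μ) (v : E) :
    Integrable (fun ω => ⟪Z ω, v⟫ * ‖Z ω‖) μ := by
  refine ((hZ.integrable_norm_pow two_ne_zero).const_mul ‖v‖).mono'
    ((hZ.1.inner aestronglyMeasurable_const).mul hZ.1.norm) (ae_of_all _ fun ω => ?_)
  rw [norm_mul, norm_norm, Real.norm_eq_abs]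
  calc |⟪Z ω, v⟫| * ‖Z ω‖ ≤ ‖Z ω‖ * ‖v‖ * ‖Z ω‖ := by
        gcongr
        exact abs_real_inner_le_norm _ _
    _ = ‖v‖ * ‖Z ω‖ ^ 2 := by ring

variable [IsFiniteMeasure μ]

theorem weightedLikRatio_one_pos [NeZero μ] (hZ : AEStronglyMeasurable Z μ) (y : E) :
    0 < weightedLikRatio μ Z 1 y := by
  have h := integrable_mul_pointLikRatio hZ (integrable_const (1 : ℝ)) y
  simp only [one_mul] at h
  simpa only [weightedLikRatio, Pi.one_apply, one_mul, pointLikRatio] using integral_exp_pos h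

variable [NeZero μ]

theorem fderiv_log_weightedLikRatio_one_apply (hZ : Integrable Z μ) (x v : E) :
    fderiv ℝ (fun y => log (weightedLikRatio μ Z 1 y)) x v
      = weightedLikRatio μ Z (fun ω => ⟪Z ω, v⟫) x / weightedLikRatio μ Z 1 x := by
  have hZ1 : Integrable (fun ω => (1 : Ω → ℝ) ω * ‖Z ω‖) μ := by simpa using hZ.norm
  have hW := hasFDerivAt_weightedLikRatio (g := 1) hZ.1 (integrable_const 1) hZ1 x
  rw [(hW.log (weightedLikRatio_one_pos hZ.1 x).ne').fderiv, smul_apply, smul_eq_mul,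
    integral_smul_pointLikRatio_smul_innerSL_apply (g := 1) hZ.1 aestronglyMeasurable_const hZ1,
    inv_mul_eq_div]
  simp only [Pi.one_apply, one_mul]

theorem fderiv_fderiv_log_weightedLikRatio_one_apply (hZ : MemLp Z 2 μ) (y v : E) :
    fderiv ℝ (fun x => fderiv ℝ (fun y => log (weightedLikRatio μ Z 1 y)) x v) y v
      = weightedLikRatio μ Z (fun ω => ⟪Z ω, v⟫ ^ 2) y / weightedLikRatio μ Z 1 y
        - (weightedLikRatio μ Z (fun ω => ⟪Z ω, v⟫) y / weightedLikRatio μ Z 1 y) ^ 2 := by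
  have hZ1 := hZ.integrable one_le_two
  have h1 : Integrable (fun ω => (1 : Ω → ℝ) ω * ‖Z ω‖) μ := by simpa using hZ1.norm
  have hW := hasFDerivAt_weightedLikRatio (g := 1) hZ.1 (integrable_const 1) h1 y
  have hWv := hasFDerivAt_weightedLikRatio hZ.1 (hZ1.inner_const v)
    (integrable_inner_mul_norm hZ v) y
  have hpos := weightedLikRatio_one_pos hZ.1 y
  simp_rw [fderiv_log_weightedLikRatio_one_apply hZ1]
  rw [(hWv.fun_div hW hpos.ne').fderiv, sub_apply, smul_apply, smul_apply,
    integral_smul_pointLikRatio_smul_innerSL_apply (g := 1) hZ.1 aestronglyMeasurable_const h1,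
    integral_smul_pointLikRatio_smul_innerSL_apply hZ.1 (hZ.1.inner aestronglyMeasurable_const)
      (integrable_inner_mul_norm hZ v)]
  simp only [Pi.one_apply, one_mul, ← pow_two, smul_eq_mul]
  field_simp

theorem sum_fderiv_fderiv_log_weightedLikRatio_one {ι : Type*} [Fintype ι]
    (b : OrthonormalBasis ι ℝ E) (hZ : MemLp Z 2 μ) (y : E) :
    ∑ i, fderiv ℝ (fun x => fderiv ℝ (fun y => log (weightedLikRatio μ Z 1 y)) x (b i)) y (b i)
      = weightedLikRatio μ Z (fun ω => ‖Z ω‖ ^ 2) y / weightedLikRatio μ Z 1 y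
        - ∑ i, (weightedLikRatio μ Z (fun ω => ⟪Z ω, b i⟫) y / weightedLikRatio μ Z 1 y) ^ 2 := by
  have hint : ∀ i, Integrable (fun ω => ⟪Z ω, b i⟫ ^ 2 * pointLikRatio (Z ω) y) μ := fun i =>
    integrable_mul_pointLikRatio hZ.1 (hZ.inner_const (b i)).integrable_sq y
  have hsum : ∑ i, weightedLikRatio μ Z (fun ω => ⟪Z ω, b i⟫ ^ 2) y
      = weightedLikRatio μ Z (fun ω => ‖Z ω‖ ^ 2) y := by
    simp only [weightedLikRatio, ← integral_finsetSum _ fun i _ => hint i, ← Finset.sum_mul,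
      b.sum_sq_inner_left]
  simp_rw [fderiv_fderiv_log_weightedLikRatio_one_apply hZ]
  rw [Finset.sum_sub_distrib, ← Finset.sum_div, hsum]

end WeightedLikRatio

section Channel

variable {Ω : Type*} [MeasurableSpace Ω] {μ : Measure Ω} {L : ℕ}
  {Z : Ω → EuclideanSpace ℝ (Fin L)}

theorem integral_mul_stdGaussianDensity_sub (g : Ω → ℝ) (y : EuclideanSpace ℝ (Fin L)) :
    ∫ ω, g ω * stdGaussianDensity (y - Z ω) ∂μ
      = stdGaussianDensity y * weightedLikRatio μ Z g y := by
  simp_rw [stdGaussianDensity_sub, mul_left_comm (g _)]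
  exact integral_const_mul _ _

theorem outDensity_eq_mul_weightedLikRatio_one (y : EuclideanSpace ℝ (Fin L)) :
    outDensity μ Z y = stdGaussianDensity y * weightedLikRatio μ Z 1 y := by
  simpa [outDensity] using integral_mul_stdGaussianDensity_sub (μ := μ) (Z := Z) 1 y

theorem likRatio_eq_weightedLikRatio_one : likRatio μ Z = weightedLikRatio μ Z 1 :=
  funext fun y => by
    rw [likRatio, outDensity_eq_mul_weightedLikRatio_one,
      mul_div_cancel_left₀ _ (stdGaussianDensity_pos y).ne']

theorem integral_mul_stdGaussianDensity_sub_div_outDensity (g : Ω → ℝ)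
    (y : EuclideanSpace ℝ (Fin L)) :
    (∫ ω, g ω * stdGaussianDensity (y - Z ω) ∂μ) / outDensity μ Z y
      = weightedLikRatio μ Z g y / weightedLikRatio μ Z 1 y := by
  rw [integral_mul_stdGaussianDensity_sub, outDensity_eq_mul_weightedLikRatio_one,
    mul_div_mul_left _ _ (stdGaussianDensity_pos y).ne']

theorem condMeanBayes_apply (y : EuclideanSpace ℝ (Fin L)) (l : Fin L) :
    condMeanBayes μ Z y l
      = weightedLikRatio μ Z (fun ω => Z ω l) y / weightedLikRatio μ Z 1 y :=
  integral_mul_stdGaussianDensity_sub_div_outDensity _ y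

end Channel

/-- **Hatsell–Nolte identity** (Lemma 3): for the channel `Y = Z + N`, the log-likelihood
ratio satisfies Poisson's equation `∇² log l(y) = E[‖Z‖² | Y = y] − ‖E[Z | Y = y]‖²`. -/
theorem laplacian_log_likRatio
    {Ω : Type*} [MeasurableSpace Ω] (μ : Measure Ω) [IsProbabilityMeasure μ]
    {L : ℕ} (Z : Ω → EuclideanSpace ℝ (Fin L)) (hZ : Measurable Z)
    (hZ2 : Integrable (fun ω => ‖Z ω‖ ^ 2) μ) :
    ∀ y : EuclideanSpace ℝ (Fin L),
      laplacian (fun y' => Real.log (likRatio μ Z y')) y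
        = (∫ ω, ‖Z ω‖ ^ 2 * stdGaussianDensity (y - Z ω) ∂μ) / outDensity μ Z y
          - ‖condMeanBayes μ Z y‖ ^ 2 := by
  intro y
  have hZ' : MemLp Z 2 μ := (memLp_two_iff_integrable_sq_norm hZ.aestronglyMeasurable).2 hZ2
  have h := sum_fderiv_fderiv_log_weightedLikRatio_one (EuclideanSpace.basisFun (Fin L) ℝ) hZ' y
  simp only [EuclideanSpace.basisFun_apply, EuclideanSpace.inner_single_right, one_mul,
    conj_trivial] at h
  rw [laplacian, likRatio_eq_weightedLikRatio_one, h,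
    integral_mul_stdGaussianDensity_sub_div_outDensity, EuclideanSpace.norm_sq_eq]
  simp only [Real.norm_eq_abs, sq_abs, condMeanBayes_apply]
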